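/- Let G be a finite connected undirected graph with positive conductances and marked vertex b, and let u,v be vertices distinct from b. Under the probability measure P on two-component spanning forests proportional to weight, the conditional probability that v lies in the floating component Σ given that u lies in Σ equals G_{u,v}/G_{u,u}. Equivalently, G_{u,u} times the weighted sum of 2SFs whose floating component contains both u and v equals G_{u,v} times the weighted sum of 2SFs whose floating component contains u. -/

import Mathlib

/-!
Fix `u ≠ b` and let `S v` be the weight of the 2SFs whose floating component contains `u`
and `v`. Then `S b = 0`, and `S` is harmonic at every `w ∉ {b, u}`: in
`∑ z, c(wz) (S w - S z)` only the pairs `(F, z)` in which `wz` joins the two components of `F`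
survive, with sign `+` if `w` floats and `-` if `z` floats. Adding `wz` to `F` and deleting
the first edge on the path from `w` to the root of its old component (`u`, resp. `b`) is a
weight-preserving bijection between the two kinds of pairs. Hence `Δ_D S` is supported at `u`,
i.e. `S = K • G(·, u) = K • G(u, ·)` by symmetry of `G`, and `K` cancels in
`P(u, v ∈ Σ) / P(u ∈ Σ) = S v / S u`. `Δ_D` is invertible because of the energy identity
`∑ c(vz) (g v - g z)² = 2 ⟨g, Δ g⟩` and connectivity.
-/

open scoped Classical BigOperators

noncomputable section

namespace TwoSF

variable {V : Type*} [Fintype V] [DecidableEq V]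

/-- `u` and `v` are linked by the edges in `B`. -/
def Linked (B : Finset (Sym2 V)) : V → V → Prop :=
  Relation.ReflTransGen fun a b => s(a, b) ∈ B

/-- The number of connected components of the spanning subgraph `(V, B)`. -/
def ncomp (B : Finset (Sym2 V)) : ℕ :=
  Nat.card (Quot (Linked B))

/-- `B` is a spanning forest of the complete graph on `V` with exactly `k`
connected components: it has `k` components and, by the rank count
`|B| + k = |V|`, it is acyclic (in particular it contains no loop edge).
Taking `k = 1` gives spanning trees, `k = 2` gives two-component spanning
forests (2SF). -/
def IsSF (k : ℕ) (B : Finset (Sym2 V)) : Prop :=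
  ncomp B = k ∧ B.card + k = Fintype.card V

/-- The weight of an edge set: the product of its conductances. -/
def wt (c : Sym2 V → ℝ) (B : Finset (Sym2 V)) : ℝ := ∏ e ∈ B, c e

/-- κ: the weighted sum of spanning trees.  Edge sets containing a non-edge
(an `e` with `c e = 0`) contribute weight `0`, so this is the weighted number
of spanning trees of the graph whose edges are the support of `c`. -/
def kappa1 (c : Sym2 V → ℝ) : ℝ := ∑ B ∈ Finset.univ.filter (IsSF 1), wt c B

/-- κ₂: the weighted sum of two-component spanning forests. -/
def kappa2 (c : Sym2 V → ℝ) : ℝ := ∑ B ∈ Finset.univ.filter (IsSF 2), wt c B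

/-- The floating component of `B`: the set of vertices not linked to `b`. -/
def floating (b : V) (B : Finset (Sym2 V)) : Finset V :=
  Finset.univ.filter fun v => ¬ Linked B b v

/-- The graph Laplacian `Δ` of the graph with conductances `c`. -/
def lap (c : Sym2 V → ℝ) : Matrix V V ℝ := fun u v =>
  if u = v then ∑ w ∈ Finset.univ.filter (· ≠ u), c s(u, w) else -c s(u, v)

/-- The Dirichlet Laplacian `Δ_D`, indexed by `V \ {b}`. -/
def dlap (c : Sym2 V → ℝ) (b : V) : Matrix {w : V // w ≠ b} {w : V // w ≠ b} ℝ :=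
  Matrix.of fun p q => lap c p.1 q.1

/-- The Green function with Dirichlet boundary condition at `b` (the inverse of
the Dirichlet Laplacian), with the convention that it vanishes as soon as one
of its arguments is `b`. -/
def green (c : Sym2 V → ℝ) (b : V) (u v : V) : ℝ :=
  if hu : u = b then 0 else if hv : v = b then 0 else (dlap c b)⁻¹ ⟨u, hu⟩ ⟨v, hv⟩

/-- The probability of the event `p` under the probability measure on
two-component spanning forests assigning to each 2SF a probability
proportional to its weight. -/
def pr2 (c : Sym2 V → ℝ) (p : Finset (Sym2 V) → Prop) : ℝ :=
  (∑ B ∈ Finset.univ.filter (fun B => IsSF 2 B ∧ p B), wt c B) / kappa2 c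

/-- The expectation of `((floating b B).card : ℝ) ^ k`, i.e. of `|Σ|^k`, under
the probability measure on two-component spanning forests proportional to
weight. -/
def expPow (c : Sym2 V → ℝ) (b : V) (k : ℕ) : ℝ :=
  (∑ B ∈ Finset.univ.filter (IsSF 2), wt c B * ((floating b B).card : ℝ) ^ k) / kappa2 c

/-- `|∂Σ|`: the sum of the conductances of the edges having exactly one
endpoint in the floating component of `B`. -/
def bdryWt (c : Sym2 V → ℝ) (b : V) (B : Finset (Sym2 V)) : ℝ :=
  ∑ u ∈ floating b B, ∑ v ∈ (floating b B)ᶜ, c s(u, v)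

/-- The expectation of `|∂Σ|` under the probability measure on two-component
spanning forests proportional to weight. -/
def expBdry (c : Sym2 V → ℝ) (b : V) : ℝ :=
  (∑ B ∈ Finset.univ.filter (IsSF 2), wt c B * bdryWt c b B) / kappa2 c

end TwoSF

namespace TwoSF

open Finset

section Linked

variable {V : Type*} {B B' : Finset (Sym2 V)} {a d x y : V}

theorem Linked.refl (B : Finset (Sym2 V)) (a : V) : Linked B a a := Relation.ReflTransGen.refl

theorem linked_of_mem (h : s(x, y) ∈ B) : Linked B x y := Relation.ReflTransGen.single h

theorem Linked.trans {e : V} (h : Linked B a d) (h' : Linked B d e) : Linked B a e :=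
  Relation.ReflTransGen.trans h h'

theorem Linked.symm (h : Linked B a d) : Linked B d a := by
  induction h with
  | refl => exact Linked.refl B a
  | tail _ hstep ih => exact (linked_of_mem (Sym2.eq_swap ▸ hstep)).trans ih

theorem Linked.mono (hB : B ⊆ B') (h : Linked B a d) : Linked B' a d :=
  Relation.ReflTransGen.mono (fun _ _ hab => hB hab) _ _ h

theorem linked_equivalence (B : Finset (Sym2 V)) : Equivalence (Linked B) :=
  ⟨Linked.refl B, Linked.symm, Linked.trans⟩

theorem linked_of_ncomp_eq_one (h : ncomp B = 1) (a d : V) : Linked B a d := by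
  have := (Nat.card_eq_one_iff_unique.mp h).1
  exact ((linked_equivalence B).eqvGen_iff).mp (Quot.eq.mp (Subsingleton.elim _ _))

theorem linked_empty_iff : Linked (∅ : Finset (Sym2 V)) a d ↔ d = a :=
  Relation.reflTransGen_iff_eq fun _ h => Finset.notMem_empty _ h

theorem linked_insert_iff :
    Linked (insert s(x, y) B) a d ↔
      Linked B a d ∨ (Linked B a x ∧ Linked B y d) ∨ (Linked B a y ∧ Linked B x d) := by
  constructor
  · intro h
    induction h with
    | refl => exact Or.inl (Linked.refl B a)
    | tail _ hstep ih =>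
      rcases Finset.mem_insert.mp hstep with hxy | hB
      · rcases Sym2.eq_iff.mp hxy with ⟨rfl, rfl⟩ | ⟨rfl, rfl⟩ <;>
          rcases ih with h1 | ⟨h1, -⟩ | ⟨h1, -⟩ <;>
          simp only [h1, Linked.refl, and_self, or_true, true_or]
      · rcases ih with h1 | ⟨h1, h2⟩ | ⟨h1, h2⟩
        · exact Or.inl (h1.trans (linked_of_mem hB))
        · exact Or.inr (Or.inl ⟨h1, h2.trans (linked_of_mem hB)⟩)
        · exact Or.inr (Or.inr ⟨h1, h2.trans (linked_of_mem hB)⟩)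
  · have hsub : B ⊆ insert s(x, y) B := Finset.subset_insert _ _
    have hedge : Linked (insert s(x, y) B) x y := linked_of_mem (Finset.mem_insert_self _ _)
    rintro (h | ⟨h1, h2⟩ | ⟨h1, h2⟩)
    · exact h.mono hsub
    · exact ((h1.mono hsub).trans hedge).trans (h2.mono hsub)
    · exact ((h1.mono hsub).trans hedge.symm).trans (h2.mono hsub)

theorem linked_insert_of_linked (h : Linked B x y) : Linked (insert s(x, y) B) = Linked B := by
  ext a d
  rw [linked_insert_iff]
  refine ⟨?_, Or.inl⟩
  rintro (h1 | ⟨h1, h2⟩ | ⟨h1, h2⟩)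
  · exact h1
  · exact (h1.trans h).trans h2
  · exact (h1.trans h.symm).trans h2

theorem ncomp_insert_of_linked (h : Linked B x y) : ncomp (insert s(x, y) B) = ncomp B := by
  rw [ncomp, ncomp, linked_insert_of_linked h]

theorem Linked.erase_of_not_linked {F : Finset (Sym2 V)} (h : Linked F a d)
    (ha : ¬ Linked F a x) (he : s(x, y) ∈ F) : Linked (F.erase s(x, y)) a d := by
  rcases linked_insert_iff.mp ((insert_erase he).symm ▸ h) with g | ⟨g, -⟩ | ⟨g, -⟩
  · exact g
  · exact absurd (g.mono (erase_subset _ _)) ha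
  · exact absurd ((g.mono (erase_subset _ _)).trans (linked_of_mem he).symm) ha

theorem exists_mem_linked_not_linked {F : Finset (Sym2 V)} {w : V} (hE : Linked B w d)
    (hF : ¬ Linked F w d) : ∃ x y, s(x, y) ∈ B ∧ Linked F w x ∧ ¬ Linked F w y := by
  induction hE with
  | refl => exact absurd (Linked.refl F w) hF
  | @tail m n _ hstep ih =>
    by_cases hwm : Linked F w m
    · exact ⟨m, n, hstep, hwm, hF⟩
    · exact ih hwm

end Linked

section Components

variable {V : Type*} [Fintype V] {B : Finset (Sym2 V)} {p q v x y : V}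

def component (B : Finset (Sym2 V)) (v : V) : Finset V := univ.filter (Linked B v)

theorem mem_component : y ∈ component B v ↔ Linked B v y := by simp [component]

theorem component_eq_iff : component B v = component B y ↔ Linked B v y := by
  refine ⟨fun h => mem_component.mp (h ▸ mem_component.mpr (Linked.refl B y)), fun h => ?_⟩
  ext z
  simp only [mem_component]
  exact ⟨fun hz => h.symm.trans hz, fun hz => h.trans hz⟩

theorem ncomp_eq_card_image (B : Finset (Sym2 V)) :
    ncomp B = #(univ.image (component B)) := by
  have hker : Linked B = (Setoid.ker (component B)).r := by
    ext a d
    exact component_eq_iff.symm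
  rw [ncomp, hker, ← Set.toFinset_range, ← Nat.card_eq_card_toFinset]
  exact Nat.card_congr (Setoid.quotientKerEquivRange _)

theorem ncomp_empty : ncomp (∅ : Finset (Sym2 V)) = Fintype.card V := by
  have hsingle : component (∅ : Finset (Sym2 V)) = singleton := by
    ext v w
    simp [mem_component, linked_empty_iff]
  rw [ncomp_eq_card_image, hsingle, card_image_of_injective _ singleton_injective, card_univ]

theorem ncomp_eq_two_iff (hpq : ¬ Linked B p q) :
    ncomp B = 2 ↔ ∀ v, Linked B p v ∨ Linked B q v := by
  have hsub : {component B p, component B q} ⊆ univ.image (component B) := by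
    simp [insert_subset_iff]
  have hpair : #{component B p, component B q} = 2 :=
    card_pair fun h => hpq (component_eq_iff.mp h)
  rw [ncomp_eq_card_image]
  constructor
  · intro h v
    have himage := eq_of_subset_of_card_le hsub (by rw [h, hpair])
    have hv : component B v ∈ ({component B p, component B q} : Finset _) :=
      himage ▸ mem_image_of_mem _ (mem_univ v)
    simpa [eq_comm, component_eq_iff] using hv
  · intro h
    rw [← hpair]
    congr 1
    refine (eq_of_subset_of_card_le hsub (card_le_card ?_)).symm
    intro s hs
    obtain ⟨v, -, rfl⟩ := mem_image.mp hs
    rcases h v with hv | hv <;> simp [component_eq_iff.mpr hv]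

theorem component_insert (v : V) :
    component (insert s(x, y) B) v =
      if Linked B v x ∨ Linked B v y then component B x ∪ component B y else component B v := by
  ext z
  simp only [mem_component, linked_insert_iff]
  split_ifs with hv
  · simp only [mem_union, mem_component]
    rcases hv with hvx | hvy
    · have hz : ∀ z, Linked B v z ↔ Linked B x z := fun z => ⟨hvx.symm.trans, hvx.trans⟩
      rw [hz, hz]
      have := Linked.refl B x
      tauto
    · have hz : ∀ z, Linked B v z ↔ Linked B y z := fun z => ⟨hvy.symm.trans, hvy.trans⟩
      rw [hz, hz]
      have := Linked.refl B y
      tauto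
  · simp only [mem_component]
    tauto

theorem image_component_insert_erase (B : Finset (Sym2 V)) (x y : V) :
    (univ.image (component (insert s(x, y) B))).erase (component B x ∪ component B y) =
      ((univ.image (component B)).erase (component B x)).erase (component B y) := by
  ext s
  simp only [mem_erase, mem_image, mem_univ, true_and]
  constructor
  · rintro ⟨hsU, v, rfl⟩
    rw [component_insert] at hsU ⊢
    split_ifs at hsU ⊢ with hv
    · exact absurd rfl hsU
    · push Not at hv
      exact ⟨fun h' => hv.2 (component_eq_iff.mp h'), fun h' => hv.1 (component_eq_iff.mp h'),
        v, rfl⟩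
  · rintro ⟨hsy, hsx, v, rfl⟩
    have hv : ¬ (Linked B v x ∨ Linked B v y) := by
      rintro (h' | h')
      exacts [hsx (component_eq_iff.mpr h'), hsy (component_eq_iff.mpr h')]
    refine ⟨fun h' => hv (Or.inl (mem_component.mp (h' ▸ mem_union_left _ ?_))), v, ?_⟩
    · rw [component_insert, if_neg hv]
    · exact mem_component.mpr (Linked.refl B x)

theorem ncomp_insert_of_not_linked (h : ¬ Linked B x y) :
    ncomp (insert s(x, y) B) + 1 = ncomp B := by
  have hU : component B x ∪ component B y ∈ univ.image (component (insert s(x, y) B)) :=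
    mem_image.mpr ⟨x, mem_univ x, by rw [component_insert, if_pos (Or.inl (Linked.refl B x))]⟩
  have hx : component B x ∈ univ.image (component B) := mem_image_of_mem _ (mem_univ x)
  have hy : component B y ∈ (univ.image (component B)).erase (component B x) :=
    mem_erase.mpr ⟨fun h' => h (component_eq_iff.mp h').symm, mem_image_of_mem _ (mem_univ y)⟩
  have hcard := congrArg card (image_component_insert_erase B x y)
  rw [card_erase_of_mem hU, card_erase_of_mem hy, card_erase_of_mem hx] at hcard
  have := card_pos.mpr ⟨_, hU⟩
  have := card_erase_of_mem hx ▸ card_pos.mpr ⟨_, hy⟩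
  rw [ncomp_eq_card_image, ncomp_eq_card_image]
  omega

end Components

section Forests

variable {V : Type*} [Fintype V] {B : Finset (Sym2 V)} {k : ℕ} {p q x y : V}

theorem card_le_ncomp_add_card (B : Finset (Sym2 V)) : Fintype.card V ≤ ncomp B + #B := by
  induction B using Finset.induction_on with
  | empty => simp [ncomp_empty]
  | @insert e B he ih =>
    induction e using Sym2.ind with | _ x y =>
    rw [card_insert_of_notMem he]
    by_cases h : Linked B x y
    · rw [ncomp_insert_of_linked h]; omega
    · have := ncomp_insert_of_not_linked h; omega

/-- Acyclicity, expressed through the rank count: equality in `card_le_ncomp_add_card`. -/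
def IsForest (B : Finset (Sym2 V)) : Prop := ncomp B + #B = Fintype.card V

theorem isSF_iff : IsSF k B ↔ IsForest B ∧ ncomp B = k := by
  unfold IsSF IsForest
  omega

theorem IsForest.not_linked_erase (hB : IsForest B) (he : s(x, y) ∈ B) :
    ¬ Linked (B.erase s(x, y)) x y := by
  intro h
  have hncomp := ncomp_insert_of_linked h
  rw [insert_erase he] at hncomp
  have := card_le_ncomp_add_card (B.erase s(x, y))
  have := card_erase_add_one he
  unfold IsForest at hB
  omega

theorem IsForest.ncomp_erase (hB : IsForest B) (he : s(x, y) ∈ B) :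
    ncomp (B.erase s(x, y)) = ncomp B + 1 := by
  have := ncomp_insert_of_not_linked (hB.not_linked_erase he)
  rw [insert_erase he] at this
  omega

theorem IsForest.erase_edge (hB : IsForest B) (he : s(x, y) ∈ B) :
    IsForest (B.erase s(x, y)) := by
  have := hB.ncomp_erase he
  have := card_erase_add_one he
  unfold IsForest at hB ⊢
  omega

theorem IsForest.insert_edge (hB : IsForest B) (h : ¬ Linked B x y) :
    IsForest (insert s(x, y) B) := by
  have := ncomp_insert_of_not_linked h
  have := card_insert_of_notMem fun he => h (linked_of_mem he)
  unfold IsForest at hB ⊢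
  omega

theorem IsSF.erase_edge (hB : IsSF k B) (he : s(x, y) ∈ B) : IsSF (k + 1) (B.erase s(x, y)) := by
  rw [isSF_iff] at hB ⊢
  exact ⟨hB.1.erase_edge he, hB.2 ▸ hB.1.ncomp_erase he⟩

theorem IsSF.insert_edge (hB : IsSF (k + 1) B) (h : ¬ Linked B x y) :
    IsSF k (insert s(x, y) B) := by
  rw [isSF_iff] at hB ⊢
  have := ncomp_insert_of_not_linked h
  exact ⟨hB.1.insert_edge h, by omega⟩

theorem IsSF.linked_iff_not_linked (hB : IsSF 2 B) (hpq : ¬ Linked B p q) :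
    Linked B q x ↔ ¬ Linked B p x :=
  ⟨fun hq hp => hpq (hp.trans hq.symm),
    fun hp => ((ncomp_eq_two_iff hpq).mp hB.1 x).resolve_left hp⟩

end Forests

section Weight

variable {V : Type*} {c : Sym2 V → ℝ}

theorem wt_nonneg (hc : ∀ e, 0 ≤ c e) (B : Finset (Sym2 V)) : 0 ≤ wt c B :=
  prod_nonneg fun e _ => hc e

theorem wt_pos (hc : ∀ e, 0 ≤ c e) {B : Finset (Sym2 V)} (hB : ∀ e ∈ B, c e ≠ 0) :
    0 < wt c B :=
  prod_pos fun e he => (hc e).lt_of_ne' (hB e he)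

end Weight

section EdgeSwap

variable {V : Type*} [Fintype V] {T : Finset (Sym2 V)} {t w y : V}

theorem IsForest.exists_step_toward (hT : IsForest T) (hwt : w ≠ t) (h : Linked T w t) :
    ∃ y, s(w, y) ∈ T ∧ Linked (T.erase s(w, y)) y t := by
  induction T using Finset.strongInduction with
  | H T ih =>
    obtain rfl | ⟨z, hz, hzt⟩ := Relation.ReflTransGen.cases_head h
    · exact absurd rfl hwt
    · have hz : s(w, z) ∈ T := hz
      have hzt : Linked T z t := hzt
      rw [← insert_erase hz, linked_insert_iff] at hzt
      rcases hzt with h1 | ⟨-, h2⟩ | ⟨-, h2⟩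
      · exact ⟨z, hz, h1⟩
      · exact ⟨z, hz, h2⟩
      · obtain ⟨y, hy, hyt⟩ := ih _ (erase_ssubset hz) (hT.erase_edge hz) h2
        exact ⟨y, mem_of_mem_erase hy,
          hyt.mono (erase_subset_erase _ (erase_subset _ _))⟩

theorem IsForest.step_toward_unique (hT : IsForest T) {y₁ y₂ : V}
    (h₁ : s(w, y₁) ∈ T) (l₁ : Linked (T.erase s(w, y₁)) y₁ t)
    (h₂ : s(w, y₂) ∈ T) (l₂ : Linked (T.erase s(w, y₂)) y₂ t) : y₁ = y₂ := by
  by_contra hne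
  have hne' : s(w, y₂) ≠ s(w, y₁) := by
    rw [Ne, Sym2.congr_right]
    exact Ne.symm hne
  have hD : T.erase s(w, y₁) = insert s(w, y₂) ((T.erase s(w, y₁)).erase s(w, y₂)) :=
    (insert_erase (mem_erase.mpr ⟨hne', h₂⟩)).symm
  have hsub₁ : (T.erase s(w, y₁)).erase s(w, y₂) ⊆ T.erase s(w, y₁) := erase_subset _ _
  have hsub₂ : (T.erase s(w, y₁)).erase s(w, y₂) ⊆ T.erase s(w, y₂) := by
    rw [erase_right_comm]; exact erase_subset _ _
  have hcut₁ := hT.not_linked_erase h₁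
  have hcut₂ := hT.not_linked_erase h₂
  have hy₁w : Linked (T.erase s(w, y₂)) w y₁ :=
    linked_of_mem (mem_erase.mpr ⟨hne'.symm, h₁⟩)
  rcases linked_insert_iff.mp (hD ▸ l₁) with g | ⟨g, -⟩ | ⟨-, g⟩
  · exact hcut₂ ((hy₁w.trans (g.mono hsub₂)).trans l₂.symm)
  · exact hcut₁ (g.mono hsub₁).symm
  · exact hcut₁ ((g.mono hsub₁).trans l₁.symm)

/-- The neighbour of `w` in the forest `T` on the way to `t` (`t` itself if there is none). -/
def stepToward (T : Finset (Sym2 V)) (w t : V) : V :=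
  if h : ∃ y, s(w, y) ∈ T ∧ Linked (T.erase s(w, y)) y t then h.choose else t

theorem IsForest.stepToward_spec (hT : IsForest T) (hwt : w ≠ t) (h : Linked T w t) :
    s(w, stepToward T w t) ∈ T ∧
      Linked (T.erase s(w, stepToward T w t)) (stepToward T w t) t := by
  have hex := hT.exists_step_toward hwt h
  rw [stepToward, dif_pos hex]
  exact hex.choose_spec

theorem IsForest.stepToward_eq (hT : IsForest T) (hy : s(w, y) ∈ T)
    (hl : Linked (T.erase s(w, y)) y t) : stepToward T w t = y := by
  have hex : ∃ y, s(w, y) ∈ T ∧ Linked (T.erase s(w, y)) y t := ⟨y, hy, hl⟩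
  have hspec := hex.choose_spec
  rw [stepToward, dif_pos hex]
  exact hT.step_toward_unique hspec.1 hspec.2 hy hl

def edgeSwap (t w : V) (P : Finset (Sym2 V) × V) : Finset (Sym2 V) × V :=
  let T := insert s(w, P.2) P.1
  let y := stepToward T w t
  (T.erase s(w, y), y)

def crossPairs (p q w : V) : Finset (Finset (Sym2 V) × V) :=
  univ.filter fun P => IsSF 2 P.1 ∧ ¬ Linked P.1 p q ∧ Linked P.1 q w ∧ Linked P.1 p P.2

theorem edgeSwap_spec (c : Sym2 V → ℝ) {p q : V} {P : Finset (Sym2 V) × V}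
    (hP : P ∈ crossPairs p q w) (hwq : w ≠ q) :
    edgeSwap q w P ∈ crossPairs q p w ∧ edgeSwap p w (edgeSwap q w P) = P ∧
      wt c (edgeSwap q w P).1 * c s(w, (edgeSwap q w P).2) = wt c P.1 * c s(w, P.2) := by
  obtain ⟨F, z⟩ := P
  simp only [crossPairs, mem_filter, mem_univ, true_and] at hP ⊢
  obtain ⟨hF, hpq, hqw, hpz⟩ := hP
  have hwz : ¬ Linked F w z := fun h => hpq ((hpz.trans h.symm).trans hqw.symm)
  have hzF : s(w, z) ∉ F := fun h => hwz (linked_of_mem h)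
  set T := insert s(w, z) F with hTdef
  have hT : IsSF 1 T := hF.insert_edge hwz
  have hTF : T.erase s(w, z) = F := erase_insert hzF
  have hTf := (isSF_iff.mp hT).1
  obtain ⟨hyT, hyq⟩ := hTf.stepToward_spec hwq (linked_of_ncomp_eq_one hT.1 w q)
  set y := stepToward T w q
  have hyz : s(w, y) ≠ s(w, z) := by
    rw [Ne, Sym2.congr_right]
    intro h
    rw [h, hTF] at hyq
    exact hpq (hpz.trans hyq)
  have hyF : s(w, y) ∈ F := (mem_insert.mp hyT).resolve_left hyz
  set F' := T.erase s(w, y)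
  have hcut : ¬ Linked F' w y := hTf.not_linked_erase hyT
  have hpz' : Linked F' p z :=
    (hpz.erase_of_not_linked (fun h => hpq (h.trans hqw.symm)) hyF).mono
      (erase_subset_erase _ (subset_insert _ _))
  have hpw' : Linked F' p w :=
    hpz'.trans (linked_of_mem (mem_erase.mpr ⟨hyz.symm, mem_insert_self _ _⟩)).symm
  have hback : edgeSwap p w (F', y) = (F, z) := by
    have hz : stepToward T w p = z :=
      hTf.stepToward_eq (mem_insert_self _ _) (hTF ▸ hpz.symm)
    simp only [edgeSwap, F', insert_erase hyT, hz, hTF]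
  have hwt : wt c F' * c s(w, y) = wt c F * c s(w, z) := by
    have h₁ : wt c T = c s(w, z) * wt c F := prod_insert hzF
    have h₂ : wt c T = c s(w, y) * wt c F' := by
      rw [← insert_erase hyT]
      exact prod_insert (notMem_erase _ _)
    linarith
  exact ⟨⟨hT.erase_edge hyT, fun h => hcut ((hpw'.symm.trans h.symm).trans hyq.symm),
    hpw', hyq.symm⟩, hback, hwt⟩

theorem sum_crossPairs_comm (c : Sym2 V → ℝ) {p q : V} (hwp : w ≠ p) (hwq : w ≠ q) :
    ∑ P ∈ crossPairs p q w, wt c P.1 * c s(w, P.2) =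
      ∑ P ∈ crossPairs q p w, wt c P.1 * c s(w, P.2) :=
  sum_nbij' (edgeSwap q w) (edgeSwap p w)
    (fun _ hP => (edgeSwap_spec c hP hwq).1) (fun _ hP => (edgeSwap_spec c hP hwp).1)
    (fun _ hP => (edgeSwap_spec c hP hwq).2.1) (fun _ hP => (edgeSwap_spec c hP hwp).2.1)
    (fun _ hP => (edgeSwap_spec c hP hwq).2.2.symm)

end EdgeSwap

section FloatingWeight

variable {V : Type*} [Fintype V] {B : Finset (Sym2 V)}

theorem mem_floating {b v : V} : v ∈ floating b B ↔ ¬ Linked B b v := by simp [floating]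

def floatWt (c : Sym2 V → ℝ) (b u v : V) : ℝ :=
  ∑ B ∈ univ.filter (fun B => IsSF 2 B ∧ u ∈ floating b B ∧ v ∈ floating b B), wt c B

theorem pr2_eq_floatWt_div (c : Sym2 V → ℝ) (b u v : V) :
    pr2 c (fun B => u ∈ floating b B ∧ v ∈ floating b B) = floatWt c b u v / kappa2 c := by
  unfold pr2 floatWt
  congr

theorem floatWt_right_self (c : Sym2 V → ℝ) (b u : V) : floatWt c b u b = 0 :=
  sum_eq_zero fun B hB => absurd (Linked.refl B b) (mem_floating.mp (mem_filter.mp hB).2.2.2)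

theorem floatWt_sub_eq_crossPairs (c : Sym2 V → ℝ) (b u w z : V) (B : Finset (Sym2 V)) :
    c s(w, z) * ((if IsSF 2 B ∧ u ∈ floating b B ∧ w ∈ floating b B then wt c B else 0) -
        (if IsSF 2 B ∧ u ∈ floating b B ∧ z ∈ floating b B then wt c B else 0)) =
      (if (B, z) ∈ crossPairs b u w then wt c B * c s(w, z) else 0) -
        (if (B, z) ∈ crossPairs u b w then wt c B * c s(w, z) else 0) := by
  simp only [crossPairs, mem_filter, mem_univ, true_and, mem_floating]
  by_cases hB : IsSF 2 B ∧ ¬ Linked B b u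
  · obtain ⟨hB, hbu⟩ := hB
    have hub : ¬ Linked B u b := fun h => hbu h.symm
    simp only [hB.linked_iff_not_linked hbu]
    by_cases hw : Linked B b w <;> by_cases hz : Linked B b z <;>
      simp [hB, hbu, hw, hz, Linked.refl, mul_comm]
  · have hub : ¬ (IsSF 2 B ∧ ¬ Linked B u b) := fun h => hB ⟨h.1, fun h' => h.2 h'.symm⟩
    rw [if_neg (by tauto), if_neg (by tauto), if_neg (by tauto), if_neg (by tauto)]
    ring

theorem floatWt_harmonic (c : Sym2 V → ℝ) {b u w : V} (hwb : w ≠ b) (hwu : w ≠ u) :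
    ∑ z, c s(w, z) * (floatWt c b u w - floatWt c b u z) = 0 := by
  calc ∑ z, c s(w, z) * (floatWt c b u w - floatWt c b u z)
      = ∑ z, ∑ B, ((if (B, z) ∈ crossPairs b u w then wt c B * c s(w, z) else 0) -
          (if (B, z) ∈ crossPairs u b w then wt c B * c s(w, z) else 0)) := by
        simp only [floatWt, sum_filter, ← sum_sub_distrib, mul_sum, floatWt_sub_eq_crossPairs]
    _ = ∑ P ∈ crossPairs b u w, wt c P.1 * c s(w, P.2) -
          ∑ P ∈ crossPairs u b w, wt c P.1 * c s(w, P.2) := by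
        rw [← sum_ite_mem_eq (crossPairs b u w), ← sum_ite_mem_eq (crossPairs u b w),
          ← sum_sub_distrib, Fintype.sum_prod_type_right]
    _ = 0 := sub_eq_zero.mpr (sum_crossPairs_comm c hwb hwu)

end FloatingWeight

section Positivity

variable {V : Type*} [Fintype V] {c : Sym2 V → ℝ} {E : Finset (Sym2 V)} {b u : V}

theorem exists_isSF_two_subset_not_linked (hE : ncomp E = 1) (hub : u ≠ b) :
    ∃ F ⊆ E, IsSF 2 F ∧ ¬ Linked F b u := by
  let C := univ.filter fun F => F ⊆ E ∧ IsForest F ∧ ¬ Linked F b u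
  have hempty : ∅ ∈ C := mem_filter.mpr ⟨mem_univ _, empty_subset E,
    by rw [IsForest, ncomp_empty, card_empty, add_zero], fun h => hub (linked_empty_iff.mp h)⟩
  obtain ⟨F, hFC, hmax⟩ := exists_max_image C card ⟨∅, hempty⟩
  obtain ⟨hFE, hF, hbu⟩ := (mem_filter.mp hFC).2
  have hcover : ∀ v, Linked F b v ∨ Linked F u v := by
    by_contra! ⟨v, hbv, huv⟩
    obtain ⟨x, y, hxy, hvx, hvy⟩ :=
      exists_mem_linked_not_linked (linked_of_ncomp_eq_one hE v b) fun h => hbv h.symm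
    have hnxy : ¬ Linked F x y := fun h => hvy (hvx.trans h)
    have hbu' : ¬ Linked (insert s(x, y) F) b u := by
      rw [linked_insert_iff]
      rintro (h | ⟨h, -⟩ | ⟨-, h⟩)
      exacts [hbu h, hbv (h.trans hvx.symm), huv (hvx.trans h).symm]
    have hbig := hmax _ (mem_filter.mpr ⟨mem_univ _, insert_subset hxy hFE, hF.insert_edge hnxy,
      hbu'⟩)
    rw [card_insert_of_notMem fun h => hnxy (linked_of_mem h)] at hbig
    omega
  exact ⟨F, hFE, isSF_iff.mpr ⟨hF, (ncomp_eq_two_iff hbu).mpr hcover⟩, hbu⟩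

theorem floatWt_self_pos (hc : ∀ e, 0 ≤ c e)
    (hconn : ncomp (univ.filter fun e : Sym2 V => c e ≠ 0) = 1) (hub : u ≠ b) :
    0 < floatWt c b u u := by
  obtain ⟨F, hFE, hF, hbu⟩ := exists_isSF_two_subset_not_linked hconn hub
  refine sum_pos' (fun B _ => wt_nonneg hc _) ⟨F, ?_, ?_⟩
  · simp [hF, mem_floating, hbu]
  · exact wt_pos hc fun e he => (mem_filter.mp (hFE he)).2

theorem floatWt_le_kappa2 (hc : ∀ e, 0 ≤ c e) (b u v : V) : floatWt c b u v ≤ kappa2 c :=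
  sum_le_sum_of_subset_of_nonneg (monotone_filter_right _ fun _ _ => And.left)
    fun _ _ _ => wt_nonneg hc _

end Positivity

section Energy

variable {V : Type*} [Fintype V] {c : Sym2 V → ℝ} {b : V}

theorem sum_sum_mul_sq_sub (c : Sym2 V → ℝ) (g : V → ℝ) :
    ∑ v, ∑ z, c s(v, z) * (g v - g z) ^ 2 =
      2 * ∑ v, g v * ∑ z, c s(v, z) * (g v - g z) := by
  have hswap : ∑ v, ∑ z, c s(v, z) * (g z * (g z - g v)) =
      ∑ v, ∑ z, c s(v, z) * (g v * (g v - g z)) := by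
    rw [sum_comm]
    exact sum_congr rfl fun v _ => sum_congr rfl fun z _ => by rw [Sym2.eq_swap]
  calc ∑ v, ∑ z, c s(v, z) * (g v - g z) ^ 2
      = ∑ v, ∑ z, c s(v, z) * (g v * (g v - g z)) +
          ∑ v, ∑ z, c s(v, z) * (g z * (g z - g v)) := by
        rw [← sum_add_distrib]
        refine sum_congr rfl fun v _ => ?_
        rw [← sum_add_distrib]
        exact sum_congr rfl fun z _ => by ring
    _ = 2 * ∑ v, g v * ∑ z, c s(v, z) * (g v - g z) := by
        rw [hswap, ← two_mul]
        simp only [mul_sum, mul_left_comm (c _)]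

theorem eq_zero_of_harmonic (hc : ∀ e, 0 ≤ c e)
    (hconn : ncomp (univ.filter fun e : Sym2 V => c e ≠ 0) = 1) {g : V → ℝ} (hgb : g b = 0)
    (hg : ∀ v, v ≠ b → ∑ z, c s(v, z) * (g v - g z) = 0) : g = 0 := by
  have henergy : ∑ v, ∑ z, c s(v, z) * (g v - g z) ^ 2 = 0 := by
    rw [sum_sum_mul_sq_sub, sum_eq_zero fun v _ => ?_, mul_zero]
    by_cases hv : v = b
    · rw [hv, hgb, zero_mul]
    · rw [hg v hv, mul_zero]
  have hnonneg : ∀ v z, 0 ≤ c s(v, z) * (g v - g z) ^ 2 := fun v z =>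
    mul_nonneg (hc _) (sq_nonneg _)
  have hedge : ∀ v z, c s(v, z) ≠ 0 → g v = g z := fun v z hvz => by
    have := (sum_eq_zero_iff_of_nonneg fun v _ => sum_nonneg fun z _ => hnonneg v z).mp
      henergy v (mem_univ v)
    have := (sum_eq_zero_iff_of_nonneg fun z _ => hnonneg v z).mp this z (mem_univ z)
    exact sub_eq_zero.mp (pow_eq_zero_iff two_ne_zero |>.mp
      ((mul_eq_zero.mp this).resolve_left hvz))
  have hprop : ∀ v, Linked (univ.filter fun e : Sym2 V => c e ≠ 0) b v → g b = g v := by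
    intro v h
    induction h with
    | refl => rfl
    | tail _ hstep ih => exact ih.trans (hedge _ _ (mem_filter.mp hstep).2)
  funext v
  exact (hprop v (linked_of_ncomp_eq_one hconn b v)).symm.trans hgb

end Energy

end TwoSF

namespace Matrix

theorem eq_nonsing_inv_mul_of_mulVec_eq_zero {n R : Type*} [Fintype n] [DecidableEq n]
    [CommRing R] {M : Matrix n n R} (hM : IsUnit M.det) {x : n → R} {q : n}
    (h : ∀ p ≠ q, (M *ᵥ x) p = 0) (p : n) : x p = M⁻¹ p q * (M *ᵥ x) q := by
  have hsingle : M *ᵥ x = Pi.single q ((M *ᵥ x) q) := by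
    ext p
    by_cases hp : p = q
    · subst hp; simp
    · simp [h p hp, hp]
  have hx : x = M⁻¹ *ᵥ (M *ᵥ x) := by
    rw [mulVec_mulVec, nonsing_inv_mul _ hM, one_mulVec]
  rw [congrFun hx p, hsingle]
  simp

end Matrix

namespace TwoSF

open Finset Matrix

section Laplacian

variable {V : Type*} [Fintype V] [DecidableEq V] {c : Sym2 V → ℝ} {b : V}

theorem dlap_mulVec_apply (c : Sym2 V → ℝ) {g : V → ℝ} (hg : g b = 0)
    (p : {w : V // w ≠ b}) :
    (dlap c b *ᵥ fun q => g q) p = ∑ z, c s(p.1, z) * (g p - g z) := by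
  have hoff : ∀ z ∈ univ.erase p.1, lap c p z * g z = -(c s(p.1, z) * g z) := fun z hz => by
    rw [lap, if_neg (ne_of_mem_erase hz).symm, neg_mul]
  calc (dlap c b *ᵥ fun q => g q) p
      = ∑ z ∈ univ.erase b, lap c p z * g z :=
        (sum_subtype _ (fun _ => by simp) (fun z => lap c p z * g z)).symm
    _ = ∑ z, lap c p z * g z := sum_erase _ (by rw [hg, mul_zero])
    _ = ∑ z ∈ univ.erase p.1, c s(p.1, z) * (g p - g z) := by
        rw [← add_sum_erase _ _ (mem_univ p.1), sum_congr rfl hoff, lap, if_pos rfl,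
          filter_ne', sum_mul, sum_neg_distrib, ← sub_eq_add_neg, ← sum_sub_distrib]
        simp only [mul_sub]
    _ = ∑ z, c s(p.1, z) * (g p - g z) := sum_erase _ (by rw [sub_self, mul_zero])

theorem isUnit_det_dlap (hc : ∀ e, 0 ≤ c e)
    (hconn : ncomp (univ.filter fun e : Sym2 V => c e ≠ 0) = 1) (b : V) :
    IsUnit (dlap c b).det := by
  rw [isUnit_iff_ne_zero]
  intro hdet
  obtain ⟨x, hx0, hx⟩ := exists_mulVec_eq_zero_iff.mpr hdet
  let g : V → ℝ := fun v => if h : v = b then 0 else x ⟨v, h⟩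
  have hgb : g b = 0 := dif_pos rfl
  have hgx : (fun q : {w : V // w ≠ b} => g q) = x := funext fun q => dif_neg q.2
  have hg := eq_zero_of_harmonic hc hconn hgb fun v hv => by
    rw [← dlap_mulVec_apply c hgb ⟨v, hv⟩, hgx, hx, Pi.zero_apply]
  exact hx0 (hgx ▸ funext fun q => congrFun hg q)

theorem green_comm (c : Sym2 V → ℝ) (b u v : V) : green c b u v = green c b v u := by
  have hsymm : (dlap c b)⁻¹.IsSymm := IsSymm.inv <| IsSymm.ext fun p q => by
    by_cases h : p = q
    · rw [h]
    · simp only [dlap, of_apply, lap, Subtype.coe_ne_coe.mpr h, Subtype.coe_ne_coe.mpr (Ne.symm h),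
        if_false, Sym2.eq_swap]
  unfold green
  split_ifs <;> first | rfl | exact hsymm.apply _ _

theorem exists_floatWt_eq_mul_green (hc : ∀ e, 0 ≤ c e)
    (hconn : ncomp (univ.filter fun e : Sym2 V => c e ≠ 0) = 1) {u : V} (hub : u ≠ b) :
    ∃ K, ∀ v, floatWt c b u v = K * green c b u v := by
  have hgb := floatWt_right_self c b u
  let u' : {w : V // w ≠ b} := ⟨u, hub⟩
  have hsupp : ∀ p ≠ u', (dlap c b *ᵥ fun q => floatWt c b u q) p = 0 := fun p hp => by
    rw [dlap_mulVec_apply c hgb]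
    exact floatWt_harmonic c p.2 fun h => hp (Subtype.ext h)
  refine ⟨(dlap c b *ᵥ fun q => floatWt c b u q) u', fun v => ?_⟩
  by_cases hv : v = b
  · rw [hv, hgb, green, dif_neg hub, dif_pos rfl, mul_zero]
  · rw [green_comm, green, dif_neg hv, dif_neg hub, mul_comm]
    exact eq_nonsing_inv_mul_of_mulVec_eq_zero (isUnit_det_dlap hc hconn b) hsupp ⟨v, hv⟩

end Laplacian

end TwoSF

open TwoSF

theorem statement_5_general {V : Type*} [Fintype V] [DecidableEq V] (c : Sym2 V → ℝ)
    (hc : ∀ e, 0 ≤ c e)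
    (hconn : ncomp (Finset.univ.filter fun e : Sym2 V => c e ≠ 0) = 1)
    (b u v : V) (hu : u ≠ b) :
    pr2 c (fun B => u ∈ floating b B ∧ v ∈ floating b B) /
        pr2 c (fun B => u ∈ floating b B) =
      green c b u v / green c b u u := by
  have hpos := floatWt_self_pos hc hconn hu
  have hκ : kappa2 c ≠ 0 := (hpos.trans_le (floatWt_le_kappa2 hc b u u)).ne'
  obtain ⟨K, hK⟩ := exists_floatWt_eq_mul_green hc hconn hu
  have hKuu : K * green c b u u ≠ 0 := hK u ▸ hpos.ne'
  have hpr : pr2 c (fun B => u ∈ floating b B) = floatWt c b u u / kappa2 c := by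
    simpa only [and_self] using pr2_eq_floatWt_div c b u u
  rw [pr2_eq_floatWt_div, hpr, div_div_div_cancel_right₀ hκ, hK, hK,
    mul_div_mul_left _ _ (left_ne_zero_of_mul hKuu)]

/-- For a finite connected undirected graph with positive
conductances and marked vertex `b`, and vertices `u, v ≠ b`, the conditional
probability that `v` lies in the floating component `Σ` given that `u` does
equals `G_{u,v} / G_{u,u}`. -/
theorem statement_5 {V : Type*} [Fintype V] [DecidableEq V] (c : Sym2 V → ℝ)
    (hc : ∀ e, 0 ≤ c e) (hloop : ∀ v : V, c s(v, v) = 0)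
    (hconn : ncomp (Finset.univ.filter fun e : Sym2 V => c e ≠ 0) = 1)
    (b u v : V) (hu : u ≠ b) (hv : v ≠ b) :
    pr2 c (fun B => u ∈ floating b B ∧ v ∈ floating b B) /
        pr2 c (fun B => u ∈ floating b B) =
      green c b u v / green c b u u :=
  statement_5_general c hc hconn b u v hu
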